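/- In any category C with finite coproducts equipped with a notion of abstract guardedness (a relation closed under the rules (trv), (par), (cmp)), the weakening rule (wkn) is derivable: if f : X → Y is σ-guarded for a summand σ : Y' ↪ Y, and θ : Y'' ↪ Y' is a summand of Y', then f is (σ∘θ)-guarded. -/

import Mathlib

/-!
Statement 0: In any category `C` with finite coproducts equipped with a notion of
abstract guardedness (a relation closed under the rules (trv), (par), (cmp)),
the weakening rule (wkn) is derivable: if `f : X ⟶ Y` is `σ`-guarded for a summand
`σ : Y' ↪ Y`, and `θ : Y'' ↪ Y'` is a summand of `Y'`, then `f` is `(σ ∘ θ)`-guarded.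
-/

open CategoryTheory CategoryTheory.Limits

universe v u

/-- `(σ, σ')` form a binary coproduct cospan, i.e. a summand together with its complement. -/
def IsCoprodCospan {C : Type u} [Category.{v} C] {Y' Y'' Y : C}
    (σ : Y' ⟶ Y) (σ' : Y'' ⟶ Y) : Prop :=
  Nonempty (IsColimit (BinaryCofan.mk σ σ'))

/-- A notion of abstract guardedness on a category: a relation `guarded f σ σ'`
between morphisms `f : X ⟶ Y` and summands `σ : Y' ⟶ Y` (given together with a chosen
complement `σ' : Y'' ⟶ Y`), closed under the rules (trv), (par) and (cmp).
Rules are stated for arbitrary coproduct cospans, not just chosen coproducts. -/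
structure Guardedness (C : Type u) [Category.{v} C] where
  /-- `f` is guarded in the summand `σ` with complement `σ'`. -/
  guarded : ∀ {X Y' Y'' Y : C}, (X ⟶ Y) → (Y' ⟶ Y) → (Y'' ⟶ Y) → Prop
  /-- (trv): `inl ∘ f` is guarded in the summand `inr`. -/
  trv : ∀ {X Y Z P : C} (i₁ : Y ⟶ P) (i₂ : Z ⟶ P), IsCoprodCospan i₁ i₂ →
      ∀ f : X ⟶ Y, guarded (f ≫ i₁) i₂ i₁
  /-- (par): a copair of `σ`-guarded morphisms is `σ`-guarded. -/
  par : ∀ {X Y P Z' Z'' Z : C} (j₁ : X ⟶ P) (j₂ : Y ⟶ P), IsCoprodCospan j₁ j₂ →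
      ∀ (σ : Z' ⟶ Z) (σ' : Z'' ⟶ Z) (u : P ⟶ Z),
      guarded (j₁ ≫ u) σ σ' → guarded (j₂ ≫ u) σ σ' → guarded u σ σ'
  /-- (cmp): postcomposing the unguarded part with a `σ`-guarded morphism yields a
  `σ`-guarded morphism. -/
  cmp : ∀ {X Y Z P V' V'' V : C} (i₁ : Y ⟶ P) (i₂ : Z ⟶ P), IsCoprodCospan i₁ i₂ →
      ∀ (σ : V' ⟶ V) (σ' : V'' ⟶ V) (f : X ⟶ P) (u : P ⟶ V),
      guarded f i₂ i₁ → guarded (i₁ ≫ u) σ σ' → guarded (f ≫ u) σ σ'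


/-! The complement `σbar = k₂ ≫ c` of `σ` factors through the complement `c` of `θ ≫ σ`, so it
is `(θ ≫ σ)`-guarded by (trv). Viewing `Y` as the coproduct `Q ⊕ Y'`, (cmp) applied to `f ≫ 𝟙`
moves the guardedness of `f` from `σ` to `θ ≫ σ`, since `𝟙` restricted to the unguarded part `Q`
is `σbar`. -/

theorem isCoprodCospan_iff_existsUnique {C : Type u} [Category.{v} C] {A B P : C}
    {i₁ : A ⟶ P} {i₂ : B ⟶ P} :
    IsCoprodCospan i₁ i₂ ↔
      ∀ {T : C} (f : A ⟶ T) (g : B ⟶ T), ∃! h : P ⟶ T, i₁ ≫ h = f ∧ i₂ ≫ h = g := by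
  constructor
  · rintro ⟨hc⟩ T f g
    exact ⟨BinaryCofan.IsColimit.desc hc f g,
      ⟨BinaryCofan.IsColimit.inl_desc hc f g, BinaryCofan.IsColimit.inr_desc hc f g⟩,
      fun m ⟨hm₁, hm₂⟩ => BinaryCofan.IsColimit.hom_ext hc
        (hm₁.trans (BinaryCofan.IsColimit.inl_desc hc f g).symm)
        (hm₂.trans (BinaryCofan.IsColimit.inr_desc hc f g).symm)⟩
  · intro h
    choose desc hdesc huniq using @h
    exact ⟨BinaryCofan.IsColimit.mk _ desc (fun f g => (hdesc f g).1) (fun f g => (hdesc f g).2)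
      (fun f g m hm₁ hm₂ => huniq f g m ⟨hm₁, hm₂⟩)⟩

namespace IsCoprodCospan

variable {C : Type u} [Category.{v} C]

theorem existsUnique {A B P T : C} {i₁ : A ⟶ P} {i₂ : B ⟶ P} (h : IsCoprodCospan i₁ i₂)
    (f : A ⟶ T) (g : B ⟶ T) : ∃! m : P ⟶ T, i₁ ≫ m = f ∧ i₂ ≫ m = g :=
  isCoprodCospan_iff_existsUnique.1 h f g

theorem hom_ext {A B P T : C} {i₁ : A ⟶ P} {i₂ : B ⟶ P} (h : IsCoprodCospan i₁ i₂)
    {m m' : P ⟶ T} (h₁ : i₁ ≫ m = i₁ ≫ m') (h₂ : i₂ ≫ m = i₂ ≫ m') : m = m' :=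
  (h.existsUnique (i₁ ≫ m') (i₂ ≫ m')).unique ⟨h₁, h₂⟩ ⟨rfl, rfl⟩

theorem symm {A B P : C} {i₁ : A ⟶ P} {i₂ : B ⟶ P} (h : IsCoprodCospan i₁ i₂) :
    IsCoprodCospan i₂ i₁ :=
  isCoprodCospan_iff_existsUnique.2 fun g f => by
    simpa only [and_comm] using h.existsUnique f g

theorem comp {Y Y' Y'' Q Q' W : C} {σ : Y' ⟶ Y} {σbar : Q ⟶ Y} {θ : Y'' ⟶ Y'} {θbar : Q' ⟶ Y'}
    {k₁ : Q' ⟶ W} {k₂ : Q ⟶ W} {c : W ⟶ Y} (hσ : IsCoprodCospan σ σbar)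
    (hθ : IsCoprodCospan θ θbar) (hk : IsCoprodCospan k₁ k₂)
    (hc₁ : k₁ ≫ c = θbar ≫ σ) (hc₂ : k₂ ≫ c = σbar) :
    IsCoprodCospan (θ ≫ σ) c := by
  refine isCoprodCospan_iff_existsUnique.2 fun a b => ?_
  obtain ⟨u, ⟨hu₁, hu₂⟩, -⟩ := hθ.existsUnique a (k₁ ≫ b)
  obtain ⟨h, ⟨hh₁, hh₂⟩, -⟩ := hσ.existsUnique u (k₂ ≫ b)
  refine ⟨h, ⟨by rw [Category.assoc, hh₁, hu₁], hk.hom_ext ?_ ?_⟩, fun m ⟨hm₁, hm₂⟩ => ?_⟩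
  · rw [reassoc_of% hc₁, hh₁, hu₂]
  · rw [reassoc_of% hc₂, hh₂]
  · rw [Category.assoc] at hm₁
    have hσm : σ ≫ m = u := hθ.hom_ext (by rw [hm₁, hu₁])
      (by rw [hu₂, ← hm₂, reassoc_of% hc₁])
    exact hσ.hom_ext (by rw [hσm, hh₁]) (by rw [hh₂, ← hm₂, reassoc_of% hc₂])

end IsCoprodCospan

theorem Guardedness.guarded_of_guarded_complement {C : Type u} [Category.{v} C]
    (G : Guardedness C) {X Y Y' Q V' V'' : C} {σ : Y' ⟶ Y} {σbar : Q ⟶ Y}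
    (hσ : IsCoprodCospan σ σbar) {f : X ⟶ Y} (hf : G.guarded f σ σbar)
    {τ : V' ⟶ Y} {τbar : V'' ⟶ Y} (hσbar : G.guarded σbar τ τbar) : G.guarded f τ τbar := by
  simpa only [Category.comp_id] using
    G.cmp σbar σ hσ.symm τ τbar f (𝟙 Y) hf (by rwa [Category.comp_id])

theorem wkn_derivable {C : Type u} [Category.{v} C] (G : Guardedness C)
    {X Y Y' Y'' Q Q' W : C}
    (σ : Y' ⟶ Y) (σbar : Q ⟶ Y) (hσ : IsCoprodCospan σ σbar)
    (θ : Y'' ⟶ Y') (θbar : Q' ⟶ Y') (hθ : IsCoprodCospan θ θbar)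
    (f : X ⟶ Y) (hf : G.guarded f σ σbar)
    (k₁ : Q' ⟶ W) (k₂ : Q ⟶ W) (hk : IsCoprodCospan k₁ k₂)
    (c : W ⟶ Y) (hc₁ : k₁ ≫ c = θbar ≫ σ) (hc₂ : k₂ ≫ c = σbar) :
    G.guarded f (θ ≫ σ) c := by
  have hcomp : IsCoprodCospan c (θ ≫ σ) := (hσ.comp hθ hk hc₁ hc₂).symm
  have hσbar : G.guarded σbar (θ ≫ σ) c := hc₂ ▸ G.trv c (θ ≫ σ) hcomp k₂
  exact G.guarded_of_guarded_complement hσ hf hσbar
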